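/- arXiv:0903.4087 — 5 statements merged into one kernel-verified Lean document; each statement's English description precedes it below -/
import Mathlib

section
/- Let U ⊂ ℂⁿ be open, r : U → ℝ of class C², and ζ₀ ∈ U a point at which the Levi form of r is positive definite, i.e. there is c > 0 such that D²r(ζ₀)(w,w) + D²r(ζ₀)(iw,iw) ≥ c|w|² for all w ∈ ℂⁿ. Define the Levi polynomial F(ζ,z) = Σ_{j=1}^n (∂r/∂ζ_j)(ζ)·(ζ_j − z_j) − (1/2) Σ_{j,k=1}^n (∂²r/∂ζ_j∂ζ_k)(ζ)·(ζ_j − z_j)(ζ_k − z_k). Then there exist ε > 0 and c' > 0 such that for all ζ, z with |ζ − ζ₀| < ε and |z − ζ₀| < ε one has 2 Re F(ζ,z) ≥ r(ζ) − r(z) + c' |ζ − z|². -/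
/-!
Write `w = ζ - z` and `B = D²r(ζ)`. Since the Wirtinger derivative `∂g/∂ζ_j` is the value at
`e_j` of the `ℂ`-linear part `v ↦ (Dg(v) - i Dg(iv))/2` of `Dg`, the Levi polynomial is a
coordinate-free expression, and for real `r` one finds
`2 Re F(ζ,z) = Dr(ζ)w - (B(w,w) - B(iw,iw))/4`.
Second-order Taylor expansion gives `r(ζ) - r(z) = Dr(ζ)w - B(w,w)/2 + O(osc(D²r)|w|²)`, so
`2 Re F(ζ,z) - r(ζ) + r(z)` equals `(B(w,w) + B(iw,iw))/4`, i.e. the Levi form at `ζ`, up to an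
error controlled by the oscillation of `D²r`. By continuity of `D²r`, near `ζ₀` the Levi form
stays bounded below by a multiple of `|w|²` and the oscillation is small.
-/

open Finset

/-- The holomorphic Wirtinger derivative `∂g/∂ζ_j = (1/2)(∂g/∂x_j − i ∂g/∂y_j)` of a
complex-valued function, computed within the open set `U` (here `ζ_j = x_j + i y_j`). -/
noncomputable def wirtinger {n : ℕ} (U : Set (EuclideanSpace ℂ (Fin n)))
    (g : EuclideanSpace ℂ (Fin n) → ℂ) (j : Fin n) (ζ : EuclideanSpace ℂ (Fin n)) : ℂ :=
  (1 / 2 : ℂ) * (fderivWithin ℝ g U ζ (EuclideanSpace.single j 1)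
    - Complex.I * fderivWithin ℝ g U ζ (EuclideanSpace.single j Complex.I))

/-- The Levi polynomial of a real-valued function `r` (derivatives taken within `U`):
`F(ζ,z) = Σ_j ∂r/∂ζ_j(ζ)(ζ_j − z_j) − (1/2) Σ_{j,k} ∂²r/∂ζ_j∂ζ_k(ζ)(ζ_j − z_j)(ζ_k − z_k)`. -/
noncomputable def leviPolynomial {n : ℕ} (U : Set (EuclideanSpace ℂ (Fin n)))
    (r : EuclideanSpace ℂ (Fin n) → ℝ)
    (ζ z : EuclideanSpace ℂ (Fin n)) : ℂ :=
  ∑ j : Fin n, wirtinger U (fun w => (r w : ℂ)) j ζ * (ζ j - z j)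
    - (1 / 2 : ℂ) * ∑ j : Fin n, ∑ k : Fin n,
        wirtinger U (wirtinger U (fun w => (r w : ℂ)) j) k ζ * (ζ j - z j) * (ζ k - z k)

open Complex

section ComplexLinearPart

variable {E : Type*} [NormedAddCommGroup E] [NormedSpace ℂ E]

theorem ContinuousLinearMap.map_complex_smul (L : E →L[ℝ] ℂ) (c : ℂ) (w : E) :
    L (c • w) = c.re * L w + c.im * L (I • w) := by
  conv_lhs => rw [← re_add_im c, add_smul, mul_smul, Complex.coe_smul, Complex.coe_smul]
  simp [Complex.real_smul]

noncomputable def complexLinearPart (L : E →L[ℝ] ℂ) : E →ₗ[ℂ] ℂ where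
  toFun w := (1 / 2 : ℂ) * (L w - I * L (I • w))
  map_add' v w := by simp only [smul_add, map_add]; ring
  map_smul' c w := by
    have hI : L (I • I • w) = - L w := by rw [smul_smul, I_mul_I, neg_one_smul, map_neg]
    rw [smul_comm, L.map_complex_smul c w, L.map_complex_smul c (I • w), hI,
      RingHom.id_apply, smul_eq_mul]
    conv_rhs => rw [← re_add_im c]
    ring_nf
    rw [I_sq]; ring

theorem complexLinearPart_apply (L : E →L[ℝ] ℂ) (w : E) :
    complexLinearPart L w = (1 / 2 : ℂ) * (L w - I * L (I • w)) := rfl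

noncomputable def complexLinearPartAt (v : E) : (E →L[ℝ] ℂ) →L[ℝ] ℂ :=
  (1 / 2 : ℂ) • (ContinuousLinearMap.apply ℝ ℂ v - I • ContinuousLinearMap.apply ℝ ℂ (I • v))

theorem complexLinearPartAt_apply (v : E) (L : E →L[ℝ] ℂ) :
    complexLinearPartAt v L = complexLinearPart L v := by
  simp [complexLinearPartAt, complexLinearPart_apply]

end ComplexLinearPart

section Wirtinger

variable {n : ℕ} {U : Set (EuclideanSpace ℂ (Fin n))}

theorem EuclideanSpace.single_I (j : Fin n) :
    EuclideanSpace.single j I = I • EuclideanSpace.single j (1 : ℂ) := by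
  ext i
  by_cases h : i = j <;> simp [h]

theorem wirtinger_eq_complexLinearPart (g : EuclideanSpace ℂ (Fin n) → ℂ) (j : Fin n)
    (ζ : EuclideanSpace ℂ (Fin n)) :
    wirtinger U g j ζ = complexLinearPart (fderivWithin ℝ g U ζ) (EuclideanSpace.single j 1) := by
  rw [wirtinger, complexLinearPart_apply, EuclideanSpace.single_I]

theorem sum_complexLinearPart_single_mul (L : EuclideanSpace ℂ (Fin n) →L[ℝ] ℂ)
    (w : EuclideanSpace ℂ (Fin n)) :
    ∑ j, complexLinearPart L (EuclideanSpace.single j 1) * w j = complexLinearPart L w := by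
  conv_rhs => rw [← (EuclideanSpace.basisFun (Fin n) ℂ).sum_repr w]
  simp [mul_comm]

theorem sum_wirtinger_mul (g : EuclideanSpace ℂ (Fin n) → ℂ) (ζ w : EuclideanSpace ℂ (Fin n)) :
    ∑ j, wirtinger U g j ζ * w j = complexLinearPart (fderivWithin ℝ g U ζ) w := by
  simp only [wirtinger_eq_complexLinearPart, sum_complexLinearPart_single_mul]

theorem fderivWithin_wirtinger {g : EuclideanSpace ℂ (Fin n) → ℂ} {ζ : EuclideanSpace ℂ (Fin n)}
    (hU : UniqueDiffWithinAt ℝ U ζ) (hg : DifferentiableWithinAt ℝ (fderivWithin ℝ g U) U ζ)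
    (j : Fin n) (u : EuclideanSpace ℂ (Fin n)) :
    fderivWithin ℝ (wirtinger U g j) U ζ u =
      complexLinearPart (fderivWithin ℝ (fderivWithin ℝ g U) U ζ u)
        (EuclideanSpace.single j 1) := by
  have hw : wirtinger U g j =
      complexLinearPartAt (EuclideanSpace.single j 1) ∘ fderivWithin ℝ g U := by
    ext ζ
    simp [wirtinger_eq_complexLinearPart, complexLinearPartAt_apply]
  rw [hw, ((complexLinearPartAt _).hasFDerivAt.comp_hasFDerivWithinAt ζ
    hg.hasFDerivWithinAt).fderivWithin hU]
  simp [complexLinearPartAt_apply]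

theorem sum_sum_wirtinger_wirtinger_mul {g : EuclideanSpace ℂ (Fin n) → ℂ}
    {ζ : EuclideanSpace ℂ (Fin n)}
    (hU : UniqueDiffWithinAt ℝ U ζ) (hg : DifferentiableWithinAt ℝ (fderivWithin ℝ g U) U ζ)
    (w : EuclideanSpace ℂ (Fin n)) :
    let B := fderivWithin ℝ (fderivWithin ℝ g U) U ζ
    ∑ j, ∑ k, wirtinger U (wirtinger U g j) k ζ * w j * w k =
      (1 / 4) * (B w w - I * B w (I • w) - I * B (I • w) w - B (I • w) (I • w)) := by
  intro B
  have hinner : ∀ j, ∑ k, wirtinger U (wirtinger U g j) k ζ * w j * w k =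
      w j * (1 / 2) * (complexLinearPart (B w) (EuclideanSpace.single j 1)
        - I * complexLinearPart (B (I • w)) (EuclideanSpace.single j 1)) := by
    intro j
    have hsum := sum_wirtinger_mul (U := U) (wirtinger U g j) ζ w
    rw [complexLinearPart_apply, fderivWithin_wirtinger hU hg, fderivWithin_wirtinger hU hg] at hsum
    calc ∑ k, wirtinger U (wirtinger U g j) k ζ * w j * w k
        = w j * ∑ k, wirtinger U (wirtinger U g j) k ζ * w k := by
          rw [Finset.mul_sum]; exact Finset.sum_congr rfl fun k _ => by ring
      _ = _ := by rw [hsum]; ring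
  rw [Finset.sum_congr rfl fun j _ => hinner j]
  calc ∑ j, w j * (1 / 2) * (complexLinearPart (B w) (EuclideanSpace.single j 1)
        - I * complexLinearPart (B (I • w)) (EuclideanSpace.single j 1))
      = (1 / 2) * (∑ j, complexLinearPart (B w) (EuclideanSpace.single j 1) * w j
          - I * ∑ j, complexLinearPart (B (I • w)) (EuclideanSpace.single j 1) * w j) := by
        simp only [Finset.mul_sum, ← Finset.sum_sub_distrib]
        exact Finset.sum_congr rfl fun j _ => by ring
    _ = _ := by
        rw [sum_complexLinearPart_single_mul, sum_complexLinearPart_single_mul,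
          complexLinearPart_apply, complexLinearPart_apply]
        ring_nf
        rw [I_sq]
        ring

end Wirtinger

theorem ContDiffOn.differentiableOn_fderivWithin_of_two {E F : Type*} [NormedAddCommGroup E]
    [NormedSpace ℝ E] [NormedAddCommGroup F] [NormedSpace ℝ F] {f : E → F} {s : Set E}
    (hf : ContDiffOn ℝ 2 f s) (hs : UniqueDiffOn ℝ s) :
    DifferentiableOn ℝ (fderivWithin ℝ f s) s :=
  (hf.fderivWithin hs (m := 1) (by norm_num)).differentiableOn_one

section RealValued

variable {E : Type*} [NormedAddCommGroup E] [NormedSpace ℝ E] {U : Set E} {r : E → ℝ} {x : E}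

theorem fderivWithin_ofReal_comp (hU : UniqueDiffWithinAt ℝ U x)
    (hr : DifferentiableWithinAt ℝ r U x) :
    fderivWithin ℝ (fun w => (r w : ℂ)) U x = ofRealCLM.comp (fderivWithin ℝ r U x) :=
  (ofRealCLM.hasFDerivAt.comp_hasFDerivWithinAt x hr.hasFDerivWithinAt).fderivWithin hU

theorem fderivWithin_fderivWithin_ofReal_comp (hU : UniqueDiffOn ℝ U) (hr : DifferentiableOn ℝ r U)
    (hr' : DifferentiableWithinAt ℝ (fderivWithin ℝ r U) U x) (hx : x ∈ U) (v u : E) :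
    fderivWithin ℝ (fderivWithin ℝ (fun w => (r w : ℂ)) U) U x v u =
      (fderivWithin ℝ (fderivWithin ℝ r U) U x v u : ℂ) := by
  have hD : HasFDerivWithinAt (fun y => ofRealCLM.comp (fderivWithin ℝ r U y))
      ((ContinuousLinearMap.compL ℝ E ℝ ℂ ofRealCLM).comp (fderivWithin ℝ (fderivWithin ℝ r U) U x))
      U x :=
    (ContinuousLinearMap.compL ℝ E ℝ ℂ ofRealCLM).hasFDerivAt.comp_hasFDerivWithinAt x
      hr'.hasFDerivWithinAt
  rw [fderivWithin_congr (fun y hy => fderivWithin_ofReal_comp (hU y hy) (hr y hy))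
    (fderivWithin_ofReal_comp (hU x hx) (hr x hx)), hD.fderivWithin (hU x hx)]
  simp

end RealValued

theorem two_mul_re_leviPolynomial {n : ℕ} {U : Set (EuclideanSpace ℂ (Fin n))}
    {r : EuclideanSpace ℂ (Fin n) → ℝ} (hU : IsOpen U) (hr : ContDiffOn ℝ 2 r U)
    {ζ : EuclideanSpace ℂ (Fin n)} (hζ : ζ ∈ U) (z : EuclideanSpace ℂ (Fin n)) :
    let B := fderivWithin ℝ (fderivWithin ℝ r U) U ζ
    2 * (leviPolynomial U r ζ z).re = fderivWithin ℝ r U ζ (ζ - z)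
      - (B (ζ - z) (ζ - z) - B (I • (ζ - z)) (I • (ζ - z))) / 4 := by
  intro B
  have hrd : DifferentiableOn ℝ r U := hr.differentiableOn two_ne_zero
  have hr'd := hr.differentiableOn_fderivWithin_of_two hU.uniqueDiffOn
  have hd : DifferentiableWithinAt ℝ (fderivWithin ℝ (fun w => (r w : ℂ)) U) U ζ :=
    (ofRealCLM.contDiff.comp_contDiffOn hr).differentiableOn_fderivWithin_of_two
      hU.uniqueDiffOn ζ hζ
  simp only [leviPolynomial, ← PiLp.sub_apply, sum_wirtinger_mul,
    sum_sum_wirtinger_wirtinger_mul (hU.uniqueDiffOn ζ hζ) hd,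
    fderivWithin_fderivWithin_ofReal_comp hU.uniqueDiffOn hrd (hr'd ζ hζ) hζ,
    complexLinearPart_apply, fderivWithin_ofReal_comp (hU.uniqueDiffOn ζ hζ) (hrd ζ hζ)]
  simp only [ContinuousLinearMap.comp_apply, ofRealCLM_apply, sub_re, mul_re, ofReal_re,
    ofReal_im, I_re, I_im, sub_im, mul_im, div_ofNat_re, div_ofNat_im, one_re, one_im]
  ring

section Taylor

variable {E F : Type*} [NormedAddCommGroup E] [NormedSpace ℝ E] [NormedAddCommGroup F]
  [NormedSpace ℝ F] {f : E → F} {f' : E → E →L[ℝ] F} {f'' : E → E →L[ℝ] E →L[ℝ] F}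
  {s : Set E} {x y : E} {K : ℝ}

theorem Convex.norm_taylor_two_sub_le (hs : Convex ℝ s)
    (hf : ∀ z ∈ s, HasFDerivWithinAt f (f' z) s z)
    (hf' : ∀ z ∈ s, HasFDerivWithinAt f' (f'' z) s z) (hsymm : ∀ u v, f'' x u v = f'' x v u)
    (hK : ∀ z ∈ s, ‖f'' z - f'' x‖ ≤ K) (hx : x ∈ s) (hy : y ∈ s) :
    ‖f y - f x - f' x (y - x) - (1 / 2 : ℝ) • f'' x (y - x) (y - x)‖ ≤ K * ‖y - x‖ ^ 2 := by
  have hσ : segment ℝ x y ⊆ s := hs.segment_subset hx hy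
  have hK₀ : 0 ≤ K := (norm_nonneg (f'' x - f'' x)).trans (hK x hx)
  have hg : ∀ z ∈ segment ℝ x y, HasFDerivWithinAt
      (fun z => f z - (1 / 2 : ℝ) • f'' x (z - x) (z - x)) (f' z - f'' x (z - x))
      (segment ℝ x y) z := by
    intro z hz
    have hq : HasFDerivAt (fun z => f'' x (z - x) (z - x))
        ((f'' x (z - x)).comp (ContinuousLinearMap.id ℝ E) + (f'' x).flip (z - x)) z :=
      ((f'' x).hasFDerivAt.comp z ((hasFDerivAt_id z).sub_const x)).clm_apply
        ((hasFDerivAt_id z).sub_const x)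
    convert ((hf z (hσ hz)).mono hσ).sub (hq.hasFDerivWithinAt.const_smul (1 / 2 : ℝ)) using 1
    · rfl
    ext v
    simp only [sub_apply, smul_apply, add_apply,
      ContinuousLinearMap.comp_id, ContinuousLinearMap.flip_apply,
      hsymm v]
    module
  have hbound : ∀ z ∈ segment ℝ x y, ‖f' z - f'' x (z - x) - f' x‖ ≤ K * ‖y - x‖ := by
    intro z hz
    calc ‖f' z - f'' x (z - x) - f' x‖ = ‖f' z - f' x - f'' x (z - x)‖ := by abel_nf
      _ ≤ K * ‖z - x‖ := hs.norm_image_sub_le_of_norm_hasFDerivWithin_le' hf' hK hx (hσ hz)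
      _ ≤ K * ‖y - x‖ := mul_le_mul_of_nonneg_left (norm_sub_le_of_mem_segment hz) hK₀
  have := (convex_segment x y).norm_image_sub_le_of_norm_hasFDerivWithin_le' hg hbound
    (left_mem_segment ℝ x y) (right_mem_segment ℝ x y)
  simp only [sub_self, map_zero, smul_zero, sub_zero] at this
  rw [sq, ← mul_assoc]
  convert this using 2
  abel

end Taylor

section LeviForm

variable {E : Type*} [NormedAddCommGroup E] [NormedSpace ℂ E]

/-- Four times the Levi form at `w` of a function with real Hessian `B`. -/
noncomputable def leviForm (B : E →L[ℝ] E →L[ℝ] ℝ) (w : E) : ℝ :=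
  B w w + B (I • w) (I • w)

theorem abs_leviForm_sub_le (B B' : E →L[ℝ] E →L[ℝ] ℝ) (w : E) :
    |leviForm B' w - leviForm B w| ≤ 2 * ‖B' - B‖ * ‖w‖ ^ 2 := by
  have hquad : ∀ v : E, |B' v v - B v v| ≤ ‖B' - B‖ * ‖v‖ ^ 2 := fun v => by
    rw [← Real.norm_eq_abs, sq, ← mul_assoc]
    simpa using (B' - B).le_opNorm₂ v v
  have hI : ‖I • w‖ = ‖w‖ := by simp [norm_smul]
  calc |leviForm B' w - leviForm B w|
      = |(B' w w - B w w) + (B' (I • w) (I • w) - B (I • w) (I • w))| := by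
        rw [leviForm, leviForm]; ring_nf
    _ ≤ ‖B' - B‖ * ‖w‖ ^ 2 + ‖B' - B‖ * ‖w‖ ^ 2 :=
        (abs_add_le _ _).trans (add_le_add (hquad w) (hI ▸ hquad (I • w)))
    _ = 2 * ‖B' - B‖ * ‖w‖ ^ 2 := by ring

end LeviForm

theorem sub_add_leviForm_le_two_mul_re_leviPolynomial {n : ℕ} {U s : Set (EuclideanSpace ℂ (Fin n))}
    {r : EuclideanSpace ℂ (Fin n) → ℝ} (hU : IsOpen U) (hr : ContDiffOn ℝ 2 r U)
    (hs : Convex ℝ s) (hsU : s ⊆ U) {ζ z : EuclideanSpace ℂ (Fin n)} (hζ : ζ ∈ s) (hz : z ∈ s)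
    {K : ℝ} (hK : ∀ ξ ∈ s, ‖fderivWithin ℝ (fderivWithin ℝ r U) U ξ
      - fderivWithin ℝ (fderivWithin ℝ r U) U ζ‖ ≤ K) :
    r ζ - r z + leviForm (fderivWithin ℝ (fderivWithin ℝ r U) U ζ) (ζ - z) / 4
      - K * ‖ζ - z‖ ^ 2 ≤ 2 * (leviPolynomial U r ζ z).re := by
  have hrd : DifferentiableOn ℝ r U := hr.differentiableOn two_ne_zero
  have hr'd := hr.differentiableOn_fderivWithin_of_two hU.uniqueDiffOn
  have hsymm := (hr ζ (hsU hζ)).isSymmSndFDerivWithinAt (by simp) hU.uniqueDiffOn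
    (by rw [hU.interior_eq]; exact subset_closure (hsU hζ)) (hsU hζ)
  have htaylor := hs.norm_taylor_two_sub_le
    (fun x hx => (hrd x (hsU hx)).hasFDerivWithinAt.mono hsU)
    (fun x hx => (hr'd x (hsU hx)).hasFDerivWithinAt.mono hsU) hsymm hK hζ hz
  rw [← neg_sub ζ z, norm_neg, Real.norm_eq_abs] at htaylor
  simp only [map_neg, neg_apply, neg_neg, smul_eq_mul] at htaylor
  rw [two_mul_re_leviPolynomial hU hr (hsU hζ) z, leviForm]
  linarith [(abs_le.1 htaylor).1]

/-- If `r` is `C²` on an open set `U ⊆ ℂⁿ` and its Levi form is positive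
definite at `ζ₀ ∈ U`, then there are `ε > 0` and `c' > 0` such that the Levi polynomial
`F` of `r` satisfies `2 Re F(ζ,z) ≥ r(ζ) − r(z) + c'|ζ − z|²` for all `ζ, z` in the
`ε`-ball around `ζ₀`. -/
theorem leviPolynomial_re_lower_bound
    (n : ℕ)
    (U : Set (EuclideanSpace ℂ (Fin n))) (hU : IsOpen U)
    (r : EuclideanSpace ℂ (Fin n) → ℝ) (hr : ContDiffOn ℝ 2 r U)
    (ζ₀ : EuclideanSpace ℂ (Fin n)) (hζ₀ : ζ₀ ∈ U)
    -- positive definiteness of the Levi form of `r` at `ζ₀`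
    (c : ℝ) (hc : 0 < c)
    (hLevi : ∀ w : EuclideanSpace ℂ (Fin n),
      c * ‖w‖ ^ 2 ≤ iteratedFDerivWithin ℝ 2 r U ζ₀ ![w, w]
        + iteratedFDerivWithin ℝ 2 r U ζ₀ ![Complex.I • w, Complex.I • w]) :
    ∃ ε : ℝ, 0 < ε ∧ Metric.ball ζ₀ ε ⊆ U ∧ ∃ c' : ℝ, 0 < c' ∧
      ∀ ζ z : EuclideanSpace ℂ (Fin n), ‖ζ - ζ₀‖ < ε → ‖z - ζ₀‖ < ε →
        r ζ - r z + c' * ‖ζ - z‖ ^ 2 ≤ 2 * (leviPolynomial U r ζ z).re := by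
  set B := fderivWithin ℝ (fderivWithin ℝ r U) U
  have hBcont : ContinuousAt B ζ₀ :=
    ((hr.fderivWithin hU.uniqueDiffOn (m := 1) (by norm_num)).continuousOn_fderivWithin
      hU.uniqueDiffOn le_rfl).continuousAt (hU.mem_nhds hζ₀)
  obtain ⟨ε, hε, hball⟩ := Metric.eventually_nhds_iff_ball.1
    ((hBcont.eventually (Metric.closedBall_mem_nhds (B ζ₀) (by positivity : 0 < c / 16))).and
      (hU.mem_nhds hζ₀))
  refine ⟨ε, hε, fun ξ hξ => (hball ξ hξ).2, c / 16, by positivity, fun ζ z hζ hz => ?_⟩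
  have hζ' : ζ ∈ Metric.ball ζ₀ ε := mem_ball_iff_norm.2 hζ
  have hnear : ∀ ξ ∈ Metric.ball ζ₀ ε, ‖B ξ - B ζ₀‖ ≤ c / 16 := fun ξ hξ => by
    rw [← dist_eq_norm (B ξ) (B ζ₀)]
    exact (hball ξ hξ).1
  have hK : ∀ ξ ∈ Metric.ball ζ₀ ε, ‖B ξ - B ζ‖ ≤ c / 8 := fun ξ hξ => by
    linarith [norm_sub_le_norm_sub_add_norm_sub (B ξ) (B ζ₀) (B ζ), norm_sub_rev (B ζ₀) (B ζ),
      hnear ξ hξ, hnear ζ hζ']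
  have hF := sub_add_leviForm_le_two_mul_re_leviPolynomial hU hr (convex_ball ζ₀ ε)
    (fun ξ hξ => (hball ξ hξ).2) hζ' (mem_ball_iff_norm.2 hz) hK
  have hLevi₀ : c * ‖ζ - z‖ ^ 2 ≤ leviForm (B ζ₀) (ζ - z) := by
    simpa [leviForm, iteratedFDerivWithin_two_apply _ hU.uniqueDiffOn hζ₀] using hLevi (ζ - z)
  have hperturb : 2 * ‖B ζ - B ζ₀‖ * ‖ζ - z‖ ^ 2 ≤ 2 * (c / 16) * ‖ζ - z‖ ^ 2 := by
    gcongr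
    exact hnear ζ hζ'
  nlinarith [(abs_le.1 (abs_leviForm_sub_le (B ζ₀) (B ζ) (ζ - z))).1, sq_nonneg ‖ζ - z‖]
end

section
/- Let D ⊂ ℝ^N be a bounded measurable set (N ≥ 1), let j be an integer with 1 ≤ j ≤ N, and let K : D × D → ℂ be measurable with |K(x,y)| ≤ C₀ |x − y|^{j−N} for all x ≠ y in D. Let 1 ≤ p ≤ s ≤ ∞ satisfy 1/s > 1/p − j/N. Then the operator Ef(y) = ∫_D K(x,y) f(x) dx is bounded from L^p(D) to L^s(D): there is a constant C (depending only on C₀, D, N, j, p, s) such that ‖Ef‖_{L^s(D)} ≤ C ‖f‖_{L^p(D)} for all f ∈ L^p(D). -/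
open MeasureTheory ENNReal Metric Module

/-!
Bounding `|K(x, y)|` by the Riesz kernel `k(x, y) = C₀ |x - y|^(j - N)` reduces the claim to
Young's inequality for kernels: if `1/p + 1/r = 1 + 1/s` and `∫_D k(x, y)^r` is bounded uniformly
in either variable by `A`, then `‖∫ k(x, ·) g(x) dx‖_s ≤ A^(1/r) ‖g‖_p`. Pointwise this is Hölder's
inequality for the three factors of
`k g = (k^r g^p)^(1/s) (k^r)^(1/r - 1/s) (g^p)^(1/p - 1/s)`,
after which Tonelli integrates out the first factor. The hypothesis `1/s > 1/p - j/N` is exactly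
`(N - j) r < N`, so `|x - y|^((j - N) r)` is locally integrable and, `D` being bounded, its
integrals over `D` are bounded uniformly in the other variable.
-/

lemma ENNReal.mul_eq_rpow_mul_rpow_mul_rpow (a b : ℝ≥0∞) {P R S : ℝ} (hP : 0 < P) (hR : 0 < R)
    (hS : 0 ≤ S) (hSP : S ≤ P) (hSR : S ≤ R) :
    a * b = (a ^ R⁻¹ * b ^ P⁻¹) ^ S * (a ^ R⁻¹) ^ (R - S) * (b ^ P⁻¹) ^ (P - S) := by
  rw [mul_rpow_of_nonneg _ _ hS, mul_right_comm ((a ^ R⁻¹) ^ S), mul_assoc,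
    ← rpow_add_of_nonneg _ _ hS (sub_nonneg.2 hSR), ← rpow_add_of_nonneg _ _ hS (sub_nonneg.2 hSP),
    add_sub_cancel, add_sub_cancel, ← rpow_mul, ← rpow_mul, inv_mul_cancel₀ hR.ne',
    inv_mul_cancel₀ hP.ne', rpow_one, rpow_one]

lemma lintegral_mul_le_holder_three {α : Type*} [MeasurableSpace α] {μ : Measure α}
    {k g : α → ℝ≥0∞} (hk : AEMeasurable k μ) (hg : AEMeasurable g μ) {P R S : ℝ} (hP : 0 < P)
    (hR : 0 < R) (hS : 0 ≤ S) (hSP : S ≤ P) (hSR : S ≤ R) (hRPS : R + P = 1 + S) :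
    ∫⁻ x, k x * g x ∂μ ≤ (∫⁻ x, k x ^ R⁻¹ * g x ^ P⁻¹ ∂μ) ^ S * (∫⁻ x, k x ^ R⁻¹ ∂μ) ^ (R - S)
      * (∫⁻ x, g x ^ P⁻¹ ∂μ) ^ (P - S) := by
  have := ENNReal.lintegral_prod_norm_pow_le (μ := μ) Finset.univ
    (f := ![fun x => k x ^ R⁻¹ * g x ^ P⁻¹, fun x => k x ^ R⁻¹, fun x => g x ^ P⁻¹])
    (p := ![S, R - S, P - S])
    (fun i _ => by
      fin_cases i
      exacts [(hk.pow_const _).mul (hg.pow_const _), hk.pow_const _, hg.pow_const _])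
    (by rw [Fin.sum_univ_three]; change S + (R - S) + (P - S) = 1; linarith)
    (fun i _ => by fin_cases i; exacts [hS, sub_nonneg.2 hSR, sub_nonneg.2 hSP])
  simpa [Fin.prod_univ_three, ← ENNReal.mul_eq_rpow_mul_rpow_mul_rpow _ _ hP hR hS hSP hSR]
    using this

section KernelOperator

variable {α β : Type*} [MeasurableSpace α] [MeasurableSpace β] {μ : Measure α} {ν : Measure β}
  {k : α → β → ℝ≥0∞} {g : α → ℝ≥0∞} {A : ℝ≥0∞}

lemma lintegral_lintegral_mul_le_of_ae_lintegral_le [SFinite μ] [SFinite ν]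
    (hk : Measurable (Function.uncurry k)) (hg : AEMeasurable g μ)
    (hky : ∀ᵐ x ∂μ, ∫⁻ y, k x y ∂ν ≤ A) :
    ∫⁻ y, ∫⁻ x, k x y * g x ∂μ ∂ν ≤ A * ∫⁻ x, g x ∂μ := by
  calc ∫⁻ y, ∫⁻ x, k x y * g x ∂μ ∂ν = ∫⁻ x, (∫⁻ y, k x y ∂ν) * g x ∂μ := by
        rw [← lintegral_lintegral_swap (hk.aemeasurable.mul hg.comp_fst)]
        exact lintegral_congr fun x => lintegral_mul_const _ hk.of_uncurry_left
    _ ≤ ∫⁻ x, A * g x ∂μ := lintegral_mono_ae <| hky.mono fun x hx => by gcongr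
    _ = A * ∫⁻ x, g x ∂μ := lintegral_const_mul'' A hg

lemma eLpNorm_top_lintegral_kernel_mul_le (hk : Measurable (Function.uncurry k))
    (hkx : ∀ᵐ y ∂ν, ∫⁻ x, k x y ∂μ ≤ A) :
    eLpNorm (fun y => ∫⁻ x, k x y * g x ∂μ) ∞ ν ≤ A * eLpNorm g ∞ μ := by
  simp only [eLpNorm_exponent_top]
  refine essSup_le_of_ae_le _ (hkx.mono fun y hy => ?_)
  calc ∫⁻ x, k x y * g x ∂μ ≤ ∫⁻ x, k x y * eLpNormEssSup g μ ∂μ :=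
        lintegral_mono_ae <| (ae_le_eLpNormEssSup (f := g)).mono fun x hx => by gcongr; exact hx
    _ = (∫⁻ x, k x y ∂μ) * eLpNormEssSup g μ := lintegral_mul_const _ hk.of_uncurry_right
    _ ≤ A * eLpNormEssSup g μ := by gcongr

lemma ae_lintegral_kernel_mul_le (hk : Measurable (Function.uncurry k)) (hg : AEMeasurable g μ)
    {P R S : ℝ} (hP : 0 < P) (hR : 0 < R) (hS : 0 ≤ S) (hSP : S ≤ P) (hSR : S ≤ R)
    (hRPS : R + P = 1 + S) (hkx : ∀ᵐ y ∂ν, ∫⁻ x, k x y ^ R⁻¹ ∂μ ≤ A) :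
    ∀ᵐ y ∂ν, ∫⁻ x, k x y * g x ∂μ ≤ (∫⁻ x, k x y ^ R⁻¹ * g x ^ P⁻¹ ∂μ) ^ S
      * (A ^ (R - S) * (∫⁻ x, g x ^ P⁻¹ ∂μ) ^ (P - S)) := by
  filter_upwards [hkx] with y hy
  grw [lintegral_mul_le_holder_three (k := fun x => k x y) hk.of_uncurry_right.aemeasurable hg
    hP hR hS hSP hSR hRPS, hy, mul_assoc]
  linarith

lemma eLpNorm_le_rpow_mul_of_ae_le {T W : β → ℝ≥0∞} (hW : AEMeasurable W ν) {s : ℝ≥0∞}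
    (hs : s ≠ 0) {c M : ℝ≥0∞} (hT : ∀ᵐ y ∂ν, T y ≤ W y ^ s⁻¹.toReal * c)
    (hWM : ∫⁻ y, W y ∂ν ≤ M) :
    eLpNorm T s ν ≤ M ^ s⁻¹.toReal * c := by
  rcases eq_or_ne s ∞ with rfl | hs_top
  · simp only [inv_top, toReal_zero, rpow_zero, one_mul] at hT ⊢
    rw [eLpNorm_exponent_top]
    exact essSup_le_of_ae_le _ hT
  set σ := s.toReal
  have hσ : 0 < σ := toReal_pos hs hs_top
  have hσS : σ * s⁻¹.toReal = 1 := by rw [toReal_inv, mul_inv_cancel₀ hσ.ne']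
  calc eLpNorm T s ν = (∫⁻ y, T y ^ σ ∂ν) ^ s⁻¹.toReal := by
        rw [eLpNorm_eq_lintegral_rpow_enorm_toReal hs hs_top, toReal_inv, one_div]
        simp only [enorm_eq_self, σ]
    _ ≤ (∫⁻ y, W y * c ^ σ ∂ν) ^ s⁻¹.toReal := by
        gcongr ?_ ^ _
        refine lintegral_mono_ae (hT.mono fun y hy => ?_)
        calc T y ^ σ ≤ (W y ^ s⁻¹.toReal * c) ^ σ := rpow_le_rpow hy hσ.le
          _ = W y * c ^ σ := by
            rw [mul_rpow_of_nonneg _ _ hσ.le, ← rpow_mul, mul_comm _ σ, hσS, rpow_one]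
    _ ≤ (M * c ^ σ) ^ s⁻¹.toReal := by
        rw [lintegral_mul_const'' _ hW]
        gcongr
    _ = M ^ s⁻¹.toReal * c := by
        rw [mul_rpow_of_nonneg _ _ toReal_nonneg, ← rpow_mul, hσS, rpow_one]

lemma eLpNorm_lintegral_kernel_mul_le_of_ne_top [SFinite μ] [SFinite ν]
    (hk : Measurable (Function.uncurry k)) (hg : AEMeasurable g μ) {p s : ℝ≥0∞} {r : ℝ}
    (hp : 1 ≤ p) (hp_top : p ≠ ∞) (hps : p ≤ s) (hr : 0 < r)
    (hprs : p⁻¹.toReal + r⁻¹ = 1 + s⁻¹.toReal)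
    (hkx : ∀ᵐ y ∂ν, ∫⁻ x, k x y ^ r ∂μ ≤ A) (hky : ∀ᵐ x ∂μ, ∫⁻ y, k x y ^ r ∂ν ≤ A) :
    eLpNorm (fun y => ∫⁻ x, k x y * g x ∂μ) s ν ≤ A ^ r⁻¹ * eLpNorm g p μ := by
  have hp0 : p ≠ 0 := (zero_lt_one.trans_le hp).ne'
  set P := p⁻¹.toReal with hP_def
  set S := s⁻¹.toReal
  set R := r⁻¹
  have hP : 0 < P := toReal_pos (ENNReal.inv_ne_zero.2 hp_top) (inv_ne_top.2 hp0)
  have hP1 : P ≤ 1 := (toReal_mono one_ne_top (ENNReal.inv_le_one.2 hp)).trans_eq toReal_one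
  have hSP : S ≤ P := toReal_mono (inv_ne_top.2 hp0) (ENNReal.inv_le_inv.2 hps)
  have hS : 0 ≤ S := toReal_nonneg
  have hPinv : P⁻¹ = p.toReal := by rw [hP_def, toReal_inv, inv_inv]
  set G := ∫⁻ x, g x ^ p.toReal ∂μ
  have hgp : eLpNorm g p μ = G ^ P := by
    rw [eLpNorm_eq_lintegral_rpow_enorm_toReal hp0 hp_top, hP_def, toReal_inv, one_div]
    simp only [enorm_eq_self, G]
  have hpt := ae_lintegral_kernel_mul_le hk hg hP (inv_pos.2 hr) hS hSP (by linarith)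
    (by linarith) (by rwa [inv_inv])
  simp only [inv_inv, hPinv] at hpt
  have hW : AEMeasurable (fun y => ∫⁻ x, k x y ^ r * g x ^ p.toReal ∂μ) ν :=
    AEMeasurable.lintegral_prod_left' (f := fun z => k z.1 z.2 ^ r * g z.1 ^ p.toReal)
      ((hk.pow_const r).aemeasurable.mul (hg.pow_const _).comp_fst)
  calc eLpNorm (fun y => ∫⁻ x, k x y * g x ∂μ) s ν
      ≤ (A * G) ^ S * (A ^ (R - S) * G ^ (P - S)) :=
        eLpNorm_le_rpow_mul_of_ae_le hW (zero_lt_one.trans_le (hp.trans hps)).ne' hpt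
          (lintegral_lintegral_mul_le_of_ae_lintegral_le (hk.pow_const r) (hg.pow_const _) hky)
    _ = A ^ r⁻¹ * eLpNorm g p μ := by
        rw [hgp, mul_rpow_of_nonneg _ _ hS, mul_mul_mul_comm,
          ← rpow_add_of_nonneg _ _ hS (by linarith), ← rpow_add_of_nonneg _ _ hS (by linarith),
          add_sub_cancel, add_sub_cancel]

theorem eLpNorm_lintegral_kernel_mul_le [SFinite μ] [SFinite ν]
    (hk : Measurable (Function.uncurry k)) (hg : AEMeasurable g μ) {p s : ℝ≥0∞} {r : ℝ}
    (hp : 1 ≤ p) (hps : p ≤ s) (hr : 0 < r) (hprs : p⁻¹.toReal + r⁻¹ = 1 + s⁻¹.toReal)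
    (hkx : ∀ᵐ y ∂ν, ∫⁻ x, k x y ^ r ∂μ ≤ A) (hky : ∀ᵐ x ∂μ, ∫⁻ y, k x y ^ r ∂ν ≤ A) :
    eLpNorm (fun y => ∫⁻ x, k x y * g x ∂μ) s ν ≤ A ^ r⁻¹ * eLpNorm g p μ := by
  rcases eq_or_ne p ∞ with rfl | hp_top
  · obtain rfl : s = ∞ := top_le_iff.1 hps
    obtain rfl : r = 1 := by simpa using hprs
    simp only [rpow_one, inv_one] at hkx ⊢
    exact eLpNorm_top_lintegral_kernel_mul_le hk hkx
  exact eLpNorm_lintegral_kernel_mul_le_of_ne_top hk hg hp hp_top hps hr hprs hkx hky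

end KernelOperator

section RieszPotential

variable {E : Type*} [NormedAddCommGroup E] [NormedSpace ℝ E] [FiniteDimensional ℝ E]
  [MeasurableSpace E] [BorelSpace E] {μ : Measure E} [μ.IsAddHaarMeasure]

lemma lintegral_closedBall_enorm_rpow_lt_top (hd : 1 ≤ finrank ℝ E) {b : ℝ}
    (hb : -(finrank ℝ E : ℝ) < b) (ρ : ℝ) :
    ∫⁻ z in closedBall 0 ρ, ‖z‖ₑ ^ b ∂μ < ∞ := by
  have hloc : LocallyIntegrable (fun z : E => ‖z‖ ^ b) μ :=
    locallyIntegrable_of_norm_le_rpow (C := 1) (α := -b) hd (by linarith)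
      (.of_forall fun z => by simp [abs_of_nonneg (Real.rpow_nonneg (norm_nonneg z) b)])
      (measurable_norm.pow_const b).aestronglyMeasurable
  have : Nontrivial E := Module.nontrivial_of_finrank_pos (R := ℝ) hd
  refine lt_of_eq_of_lt (lintegral_congr_ae ?_)
    (hloc.integrableOn_isCompact (isCompact_closedBall 0 ρ)).2
  filter_upwards [ae_restrict_of_ae (Measure.ae_ne μ 0)] with z hz
  rw [Real.enorm_of_nonneg (by positivity), ← ENNReal.ofReal_rpow_of_pos (norm_pos_iff.2 hz),
    ofReal_norm]

lemma exists_forall_lintegral_enorm_sub_rpow_le (hd : 1 ≤ finrank ℝ E) {b : ℝ}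
    (hb : -(finrank ℝ E : ℝ) < b) {D : Set E} (hD : Bornology.IsBounded D) :
    ∃ A ≠ ∞, ∀ y ∈ D, ∫⁻ x in D, ‖x - y‖ₑ ^ b ∂μ ≤ A := by
  obtain ⟨ρ, hρ⟩ := hD.subset_closedBall 0
  refine ⟨_, (lintegral_closedBall_enorm_rpow_lt_top (μ := μ) hd hb (2 * ρ)).ne, fun y hy => ?_⟩
  have hDy : D ⊆ (· - y) ⁻¹' closedBall 0 (2 * ρ) := fun x hx => by
    have hx' := mem_closedBall_zero_iff.1 (hρ hx)
    have hy' := mem_closedBall_zero_iff.1 (hρ hy)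
    simp only [Set.mem_preimage, mem_closedBall_zero_iff]
    linarith [norm_sub_le x y]
  calc ∫⁻ x in D, ‖x - y‖ₑ ^ b ∂μ
      ≤ ∫⁻ x in (· - y) ⁻¹' closedBall 0 (2 * ρ), ‖x - y‖ₑ ^ b ∂μ := lintegral_mono_set hDy
    _ = ∫⁻ z in closedBall 0 (2 * ρ), ‖z‖ₑ ^ b ∂μ :=
      (measurePreserving_sub_right μ y).setLIntegral_comp_preimage measurableSet_closedBall
        (measurable_enorm.pow_const b)

lemma exists_eLpNorm_lintegral_riesz_kernel_mul_le (hd : 1 ≤ finrank ℝ E) {D : Set E}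
    (hD : MeasurableSet D) (hDb : Bornology.IsBounded D) (c : ℝ) {a r : ℝ} (hr : 0 < r)
    (har : -(finrank ℝ E : ℝ) < a * r) {p s : ℝ≥0∞} (hp : 1 ≤ p) (hps : p ≤ s)
    (hprs : p⁻¹.toReal + r⁻¹ = 1 + s⁻¹.toReal) :
    ∃ B ≠ ∞, ∀ g : E → ℝ≥0∞, AEMeasurable g (μ.restrict D) →
      eLpNorm (fun y => ∫⁻ x in D, ENNReal.ofReal c * ‖x - y‖ₑ ^ a * g x ∂μ) s (μ.restrict D)
        ≤ B * eLpNorm g p (μ.restrict D) := by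
  obtain ⟨A, hA, hAD⟩ := exists_forall_lintegral_enorm_sub_rpow_le (μ := μ) hd har hDb
  have hkD : ∀ y ∈ D, ∫⁻ x in D, (ENNReal.ofReal c * ‖x - y‖ₑ ^ a) ^ r ∂μ
      ≤ ENNReal.ofReal c ^ r * A := fun y hy => by
    simp_rw [mul_rpow_of_nonneg _ _ hr.le, ← rpow_mul,
      lintegral_const_mul' _ _ (rpow_ne_top_of_nonneg hr.le ofReal_ne_top)]
    gcongr
    exact hAD y hy
  refine ⟨(ENNReal.ofReal c ^ r * A) ^ r⁻¹, rpow_ne_top_of_nonneg (inv_nonneg.2 hr.le)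
    (mul_ne_top (rpow_ne_top_of_nonneg hr.le ofReal_ne_top) hA), fun g hg => ?_⟩
  refine eLpNorm_lintegral_kernel_mul_le (by fun_prop) hg hp hps hr hprs
    ((ae_restrict_mem hD).mono hkD) ((ae_restrict_mem hD).mono fun x hx => ?_)
  simpa only [enorm_sub_rev] using hkD x hx

end RieszPotential

lemma exists_young_exponent {N j : ℕ} (hN : 0 < N) (hjN : j ≤ N) {P S : ℝ}
    (hPS : S > P - (j : ℝ) / N) :
    ∃ r : ℝ, 0 < r ∧ P + r⁻¹ = 1 + S ∧ -(N : ℝ) < ((j : ℝ) - N) * r := by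
  have hN' : (0 : ℝ) < N := Nat.cast_pos.2 hN
  have hjN' : (j : ℝ) / N ≤ 1 := div_le_one_of_le₀ (Nat.cast_le.2 hjN) hN'.le
  have hR : 0 < 1 - P + S := by linarith
  have hj : (P - S) * N < j := (lt_div_iff₀ hN').1 (by linarith)
  refine ⟨(1 - P + S)⁻¹, inv_pos.2 hR, by rw [inv_inv]; ring, ?_⟩
  rw [← div_eq_mul_inv, lt_div_iff₀ hR]
  nlinarith

lemma enorm_setIntegral_mul_le_lintegral {α 𝕜 : Type*} [MeasurableSpace α] {μ : Measure α}
    [NullSingletonClass μ] [RCLike 𝕜] {D : Set α} (hD : MeasurableSet D) {u f : α → 𝕜}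
    {m : α → ℝ≥0∞} {y : α} (hu : ∀ x ∈ D, x ≠ y → ‖u x‖ₑ ≤ m x) :
    ‖∫ x in D, u x * f x ∂μ‖ₑ ≤ ∫⁻ x in D, m x * ‖f x‖ₑ ∂μ := by
  refine (enorm_integral_le_lintegral_enorm _).trans (lintegral_mono_ae ?_)
  filter_upwards [ae_restrict_mem hD, ae_restrict_of_ae (Measure.ae_ne μ y)] with x hxD hxy
  rw [enorm_mul]
  gcongr
  exact hu x hxD hxy

lemma enorm_le_ofReal_mul_enorm_rpow {F G : Type*} [SeminormedAddGroup F] [NormedAddCommGroup G]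
    {z : F} {w : G} (hw : w ≠ 0) {c a : ℝ} (h : ‖z‖ ≤ c * ‖w‖ ^ a) :
    ‖z‖ₑ ≤ ENNReal.ofReal c * ‖w‖ₑ ^ a := by
  rw [← ofReal_norm, ← ofReal_norm, ofReal_rpow_of_pos (norm_pos_iff.2 hw),
    ← ofReal_mul' (by positivity)]
  exact ofReal_le_ofReal h

theorem isotropic_kernel_Lp_to_Ls_general
    (N : ℕ)
    (D : Set (EuclideanSpace ℝ (Fin N))) (hDmeas : MeasurableSet D)
    (hDbdd : Bornology.IsBounded D)
    (j : ℕ) (hj1 : 1 ≤ j) (hjN : j ≤ N)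
    (K : EuclideanSpace ℝ (Fin N) → EuclideanSpace ℝ (Fin N) → ℂ)
    (C₀ : ℝ)
    (hK : ∀ x ∈ D, ∀ y ∈ D, x ≠ y → ‖K x y‖ ≤ C₀ * ‖x - y‖ ^ ((j : ℝ) - N))
    (p s : ℝ≥0∞) (hp : 1 ≤ p) (hps : p ≤ s)
    (hexp : (1 / s).toReal > (1 / p).toReal - (j : ℝ) / N) :
    ∃ C : ℝ, 0 < C ∧ ∀ f : EuclideanSpace ℝ (Fin N) → ℂ,
      MemLp f p (volume.restrict D) →
      eLpNorm (fun y => ∫ x in D, K x y * f x ∂volume) s (volume.restrict D)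
        ≤ ENNReal.ofReal C * eLpNorm f p (volume.restrict D) := by
  have hN : 0 < N := hj1.trans hjN
  -- makes `volume` atomless, so the diagonal `x = y` is negligible
  have : Nonempty (Fin N) := ⟨⟨0, hN⟩⟩
  obtain ⟨r, hr, hprs, har⟩ := exists_young_exponent hN hjN hexp
  rw [one_div, one_div] at hprs
  obtain ⟨B, hB, hyoung⟩ := exists_eLpNorm_lintegral_riesz_kernel_mul_le (μ := volume)
    (by rw [finrank_euclideanSpace_fin]; exact hN) hDmeas hDbdd C₀ hr (by simpa using har)
    hp hps hprs
  obtain ⟨C, hC⟩ := ENNReal.exists_nat_gt hB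
  refine ⟨C, Nat.cast_pos.2 (Nat.cast_pos.1 (zero_le.trans_lt hC)), fun f hf => ?_⟩
  calc eLpNorm (fun y => ∫ x in D, K x y * f x ∂volume) s (volume.restrict D)
      ≤ eLpNorm (fun y => ∫⁻ x in D, ENNReal.ofReal C₀ * ‖x - y‖ₑ ^ ((j : ℝ) - N) * ‖f x‖ₑ) s
          (volume.restrict D) := by
        refine eLpNorm_mono_enorm_ae ((ae_restrict_mem hDmeas).mono fun y hy => ?_)
        rw [enorm_eq_self]
        exact enorm_setIntegral_mul_le_lintegral hDmeas fun x hx hxy =>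
          enorm_le_ofReal_mul_enorm_rpow (sub_ne_zero.2 hxy) (hK x hx y hy hxy)
    _ ≤ B * eLpNorm f p (volume.restrict D) := by
        simpa only [eLpNorm_enorm] using hyoung _ hf.1.enorm
    _ ≤ ENNReal.ofReal C * eLpNorm f p (volume.restrict D) := by
        rw [ofReal_natCast]
        gcongr

/-- Let `D ⊂ ℝ^N` be bounded and measurable, `1 ≤ j ≤ N`, and let
`K : D × D → ℂ` be measurable with `|K(x,y)| ≤ C₀ |x − y|^{j−N}` off the diagonal.
If `1 ≤ p ≤ s ≤ ∞` satisfy `1/s > 1/p − j/N`, then `Ef(y) = ∫_D K(x,y) f(x) dx` is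
bounded from `L^p(D)` to `L^s(D)`. -/
theorem isotropic_kernel_Lp_to_Ls
    (N : ℕ) (hN : 1 ≤ N)
    (D : Set (EuclideanSpace ℝ (Fin N))) (hDmeas : MeasurableSet D)
    (hDbdd : Bornology.IsBounded D)
    (j : ℕ) (hj1 : 1 ≤ j) (hjN : j ≤ N)
    (K : EuclideanSpace ℝ (Fin N) → EuclideanSpace ℝ (Fin N) → ℂ)
    (hKmeas : Measurable (Function.uncurry K))
    (C₀ : ℝ)
    (hK : ∀ x ∈ D, ∀ y ∈ D, x ≠ y → ‖K x y‖ ≤ C₀ * ‖x - y‖ ^ ((j : ℝ) - N))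
    (p s : ℝ≥0∞) (hp : 1 ≤ p) (hps : p ≤ s)
    (hexp : (1 / s).toReal > (1 / p).toReal - (j : ℝ) / N) :
    ∃ C : ℝ, 0 < C ∧ ∀ f : EuclideanSpace ℝ (Fin N) → ℂ,
      MemLp f p (volume.restrict D) →
      eLpNorm (fun y => ∫ x in D, K x y * f x ∂volume) s (volume.restrict D)
        ≤ ENNReal.ofReal C * eLpNorm f p (volume.restrict D) :=
  isotropic_kernel_Lp_to_Ls_general N D hDmeas hDbdd j hj1 hjN K C₀ hK p s hp hps hexp
end

section
/- For every real μ ≥ 1 and every δ with 0 < δ < 1 there exists a constant C = C(μ, δ) > 0 such that for all θ > 0, ∫_0^∞ ∫_0^∞ t^{2μ−1} s^{−δ} (θ + s + t²)^{−(μ+1)} ds dt ≤ C θ^{−δ}. -/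
open MeasureTheory

section AnisotropicAux
open Set Real intervalIntegral

-- H1: lintegral of x^r on Ioc 0 a
lemma lint_Ioc_rpow {a r : ℝ} (ha : 0 < a) (hr : -1 < r) :
    ∫⁻ x in Set.Ioc 0 a, ENNReal.ofReal (x ^ r) = ENNReal.ofReal (a ^ (r + 1) / (r + 1)) := by
  have hint : IntegrableOn (fun x : ℝ => x ^ r) (Set.Ioc 0 a) :=
    (intervalIntegral.intervalIntegrable_rpow' hr (a := 0) (b := a)).1
  rw [← ofReal_integral_eq_lintegral_ofReal hint
      (((ae_restrict_iff' measurableSet_Ioc).2 (Filter.Eventually.of_forall fun x hx =>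
        Real.rpow_nonneg hx.1.le r)))]
  congr 1
  rw [← intervalIntegral.integral_of_le ha.le, integral_rpow (Or.inl hr),
    Real.zero_rpow (by linarith), sub_zero]

-- H2: lintegral of x^r on Ioi a
lemma lint_Ioi_rpow {a r : ℝ} (ha : 0 < a) (hr : r < -1) :
    ∫⁻ x in Set.Ioi a, ENNReal.ofReal (x ^ r) = ENNReal.ofReal (a ^ (r + 1) / (-(r + 1))) := by
  have hint : IntegrableOn (fun x : ℝ => x ^ r) (Set.Ioi a) :=
    integrableOn_Ioi_rpow_of_lt hr ha
  rw [← ofReal_integral_eq_lintegral_ofReal hint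
      (((ae_restrict_iff' measurableSet_Ioi).2 (Filter.Eventually.of_forall fun x hx =>
        Real.rpow_nonneg (ha.trans hx).le r)))]
  congr 1
  rw [integral_Ioi_rpow_of_lt hr ha]
  rw [div_neg, neg_div]

-- inner integral bound
lemma innerA {μ δ : ℝ} (hμ : 1 ≤ μ) (hδ0 : 0 < δ) (hδ1 : δ < 1) {A : ℝ} (hA : 0 < A) :
    ∫⁻ s in Set.Ioi (0:ℝ), ENNReal.ofReal (s ^ (-δ) * (A + s) ^ (-(μ+1)))
      ≤ ENNReal.ofReal ((1/(1-δ) + 1/(μ+δ)) * A ^ (-(μ+δ))) := by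
  rw [← Set.Ioc_union_Ioi_eq_Ioi hA.le,
    lintegral_union measurableSet_Ioi (Set.Ioc_disjoint_Ioi le_rfl)]
  have h1 : ∫⁻ s in Set.Ioc 0 A, ENNReal.ofReal (s ^ (-δ) * (A + s) ^ (-(μ+1)))
      ≤ ENNReal.ofReal (A ^ (-(μ+δ)) * (1/(1-δ))) := by
    calc ∫⁻ s in Set.Ioc 0 A, ENNReal.ofReal (s ^ (-δ) * (A + s) ^ (-(μ+1)))
        ≤ ∫⁻ s in Set.Ioc 0 A, ENNReal.ofReal (A ^ (-(μ+1))) * ENNReal.ofReal (s ^ (-δ)) := by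
          refine setLIntegral_mono' measurableSet_Ioc fun s hs => ?_
          rw [← ENNReal.ofReal_mul (Real.rpow_nonneg hA.le _), mul_comm (A ^ (-(μ+1)))]
          exact ENNReal.ofReal_le_ofReal (mul_le_mul_of_nonneg_left
            (Real.rpow_le_rpow_of_nonpos hA (by linarith [hs.1.le]) (by linarith))
            (Real.rpow_nonneg hs.1.le _))
      _ = ENNReal.ofReal (A ^ (-(μ+1))) * ∫⁻ s in Set.Ioc 0 A, ENNReal.ofReal (s ^ (-δ)) :=
          lintegral_const_mul' _ _ ENNReal.ofReal_ne_top
      _ = ENNReal.ofReal (A ^ (-(μ+δ)) * (1/(1-δ))) := by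
          rw [lint_Ioc_rpow hA (by linarith), ← ENNReal.ofReal_mul (Real.rpow_nonneg hA.le _),
            div_eq_mul_one_div, ← mul_assoc, ← Real.rpow_add hA,
            show -(μ+1) + (-δ + 1) = -(μ+δ) from by ring]
          ring_nf
  have h2 : ∫⁻ s in Set.Ioi A, ENNReal.ofReal (s ^ (-δ) * (A + s) ^ (-(μ+1)))
      ≤ ENNReal.ofReal (A ^ (-(μ+δ)) * (1/(μ+δ))) := by
    calc ∫⁻ s in Set.Ioi A, ENNReal.ofReal (s ^ (-δ) * (A + s) ^ (-(μ+1)))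
        ≤ ∫⁻ s in Set.Ioi A, ENNReal.ofReal (s ^ (-δ + -(μ+1))) := by
          refine setLIntegral_mono' measurableSet_Ioi fun s hs => ?_
          have hs0 : 0 < s := hA.trans hs
          rw [Real.rpow_add hs0]
          exact ENNReal.ofReal_le_ofReal (mul_le_mul_of_nonneg_left
            (Real.rpow_le_rpow_of_nonpos hs0 (by linarith) (by linarith))
            (Real.rpow_nonneg hs0.le _))
      _ = ENNReal.ofReal (A ^ (-(μ+δ)) * (1/(μ+δ))) := by
          rw [lint_Ioi_rpow hA (by linarith),
            show -δ + -(μ+1) + 1 = -(μ+δ) from by ring, div_eq_mul_one_div,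
            show -(-(μ+δ)) = μ + δ from by ring]
  calc _ ≤ ENNReal.ofReal (A ^ (-(μ+δ)) * (1/(1-δ))) + ENNReal.ofReal (A ^ (-(μ+δ)) * (1/(μ+δ))) :=
        add_le_add h1 h2
    _ = ENNReal.ofReal ((1/(1-δ) + 1/(μ+δ)) * A ^ (-(μ+δ))) := by
        rw [← ENNReal.ofReal_add
          (mul_nonneg (Real.rpow_nonneg hA.le _) (one_div_nonneg.2 (by linarith)))
          (mul_nonneg (Real.rpow_nonneg hA.le _) (one_div_nonneg.2 (by linarith)))]
        congr 1; ring

-- outer integral bound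
lemma outerB {μ δ : ℝ} (hμ : 1 ≤ μ) (hδ0 : 0 < δ) (hδ1 : δ < 1) {θ : ℝ} (hθ : 0 < θ) :
    ∫⁻ t in Set.Ioi (0:ℝ), ENNReal.ofReal (t ^ (2*μ-1) * (θ + t^2) ^ (-(μ+δ)))
      ≤ ENNReal.ofReal ((1/(2*μ) + 1/(2*δ)) * θ ^ (-δ)) := by
  set a : ℝ := Real.sqrt θ with hadef
  have ha : 0 < a := Real.sqrt_pos.2 hθ
  have hae : a = θ ^ ((1:ℝ)/2) := Real.sqrt_eq_rpow θ
  have hapow : ∀ r : ℝ, a ^ r = θ ^ (r/2) := by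
    intro r
    rw [hae, ← Real.rpow_mul hθ.le, one_div, inv_mul_eq_div]
  rw [← Set.Ioc_union_Ioi_eq_Ioi ha.le,
    lintegral_union measurableSet_Ioi (Set.Ioc_disjoint_Ioi le_rfl)]
  have h1 : ∫⁻ t in Set.Ioc 0 a, ENNReal.ofReal (t ^ (2*μ-1) * (θ + t^2) ^ (-(μ+δ)))
      ≤ ENNReal.ofReal (θ ^ (-δ) * (1/(2*μ))) := by
    calc ∫⁻ t in Set.Ioc 0 a, ENNReal.ofReal (t ^ (2*μ-1) * (θ + t^2) ^ (-(μ+δ)))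
        ≤ ∫⁻ t in Set.Ioc 0 a, ENNReal.ofReal (θ ^ (-(μ+δ))) * ENNReal.ofReal (t ^ (2*μ-1)) := by
          refine setLIntegral_mono' measurableSet_Ioc fun t ht => ?_
          rw [← ENNReal.ofReal_mul (Real.rpow_nonneg hθ.le _), mul_comm (θ ^ (-(μ+δ)))]
          exact ENNReal.ofReal_le_ofReal (mul_le_mul_of_nonneg_left
            (Real.rpow_le_rpow_of_nonpos hθ (by nlinarith [sq_nonneg t]) (by linarith))
            (Real.rpow_nonneg ht.1.le _))
      _ = ENNReal.ofReal (θ ^ (-(μ+δ))) * ∫⁻ t in Set.Ioc 0 a, ENNReal.ofReal (t ^ (2*μ-1)) :=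
          lintegral_const_mul' _ _ ENNReal.ofReal_ne_top
      _ = ENNReal.ofReal (θ ^ (-δ) * (1/(2*μ))) := by
          rw [lint_Ioc_rpow ha (by linarith), show 2*μ-1+1 = 2*μ from by ring,
            hapow (2*μ), show (2*μ)/2 = μ from by ring,
            ← ENNReal.ofReal_mul (Real.rpow_nonneg hθ.le _),
            div_eq_mul_one_div, ← mul_assoc, ← Real.rpow_add hθ,
            show -(μ+δ) + μ = -δ from by ring]
  have h2 : ∫⁻ t in Set.Ioi a, ENNReal.ofReal (t ^ (2*μ-1) * (θ + t^2) ^ (-(μ+δ)))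
      ≤ ENNReal.ofReal (θ ^ (-δ) * (1/(2*δ))) := by
    calc ∫⁻ t in Set.Ioi a, ENNReal.ofReal (t ^ (2*μ-1) * (θ + t^2) ^ (-(μ+δ)))
        ≤ ∫⁻ t in Set.Ioi a, ENNReal.ofReal (t ^ (-1-2*δ)) := by
          refine setLIntegral_mono' measurableSet_Ioi fun t ht => ?_
          have ht0 : 0 < t := ha.trans ht
          have htsq : t ^ ((2:ℝ)) = t^2 := by
            rw [show ((2:ℝ)) = ((2:ℕ):ℝ) from by norm_num, Real.rpow_natCast]
          have key : (θ + t^2) ^ (-(μ+δ)) ≤ t ^ (2 * -(μ+δ)) := by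
            rw [show t ^ (2 * -(μ+δ)) = (t ^ (2:ℝ)) ^ (-(μ+δ)) from by
                rw [← Real.rpow_mul ht0.le]]
            refine Real.rpow_le_rpow_of_nonpos (by positivity) ?_ (by linarith)
            rw [htsq]; nlinarith
          calc ENNReal.ofReal (t ^ (2*μ-1) * (θ + t^2) ^ (-(μ+δ)))
              ≤ ENNReal.ofReal (t ^ (2*μ-1) * t ^ (2 * -(μ+δ))) :=
                ENNReal.ofReal_le_ofReal
                  (mul_le_mul_of_nonneg_left key (Real.rpow_nonneg ht0.le _))
            _ = ENNReal.ofReal (t ^ (-1-2*δ)) := by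
                rw [← Real.rpow_add ht0, show 2*μ-1 + 2 * -(μ+δ) = -1-2*δ from by ring]
      _ = ENNReal.ofReal (θ ^ (-δ) * (1/(2*δ))) := by
          rw [lint_Ioi_rpow ha (by linarith), show -1-2*δ+1 = -(2*δ) from by ring,
            hapow (-(2*δ)), show -(2*δ)/2 = -δ from by ring, div_eq_mul_one_div,
            show -(-(2*δ)) = 2*δ from by ring]
  calc _ ≤ ENNReal.ofReal (θ ^ (-δ) * (1/(2*μ))) + ENNReal.ofReal (θ ^ (-δ) * (1/(2*δ))) :=
        add_le_add h1 h2
    _ = ENNReal.ofReal ((1/(2*μ) + 1/(2*δ)) * θ ^ (-δ)) := by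
        rw [← ENNReal.ofReal_add (mul_nonneg (Real.rpow_nonneg hθ.le _) (by positivity))
          (mul_nonneg (Real.rpow_nonneg hθ.le _) (by positivity))]
        congr 1; ring

end AnisotropicAux

section
open Set Real

/-- For `μ ≥ 1` and `0 < δ < 1` there is `C > 0` such that for all
`θ > 0`, `∫_0^∞ ∫_0^∞ t^{2μ−1} s^{−δ} (θ + s + t²)^{−(μ+1)} ds dt ≤ C θ^{−δ}`. -/
theorem anisotropic_double_integral_bound
    (μ δ : ℝ) (hμ : 1 ≤ μ) (hδ0 : 0 < δ) (hδ1 : δ < 1) :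
    ∃ C : ℝ, 0 < C ∧ ∀ θ : ℝ, 0 < θ →
      ∫⁻ t in Set.Ioi (0 : ℝ), ∫⁻ s in Set.Ioi (0 : ℝ),
          ENNReal.ofReal (t ^ (2 * μ - 1) * s ^ (-δ) * (θ + s + t ^ 2) ^ (-(μ + 1)))
        ≤ ENNReal.ofReal (C * θ ^ (-δ)) := by
  set c1 : ℝ := 1/(1-δ) + 1/(μ+δ) with hc1def
  set c2 : ℝ := 1/(2*μ) + 1/(2*δ) with hc2def
  have hc1 : 0 < c1 := by
    have : 0 < 1/(1-δ) := one_div_pos.2 (by linarith)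
    have : 0 < 1/(μ+δ) := one_div_pos.2 (by linarith)
    rw [hc1def]; linarith [one_div_pos.2 (show (0:ℝ) < 1-δ by linarith)]
  have hc2 : 0 < c2 := by
    rw [hc2def]
    have h1 : 0 < 1/(2*μ) := one_div_pos.2 (by linarith)
    have h2 : 0 < 1/(2*δ) := one_div_pos.2 (by linarith)
    linarith
  refine ⟨c1 * c2, mul_pos hc1 hc2, fun θ hθ => ?_⟩
  calc ∫⁻ t in Set.Ioi (0:ℝ), ∫⁻ s in Set.Ioi (0:ℝ),
          ENNReal.ofReal (t ^ (2 * μ - 1) * s ^ (-δ) * (θ + s + t ^ 2) ^ (-(μ + 1)))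
      ≤ ∫⁻ t in Set.Ioi (0:ℝ),
          ENNReal.ofReal (c1 * (t ^ (2*μ-1) * (θ + t^2) ^ (-(μ+δ)))) := by
        refine setLIntegral_mono' measurableSet_Ioi fun t ht => ?_
        have ht0 : 0 < t := ht
        have hA : 0 < θ + t^2 := by positivity
        have e1 : ∀ s : ℝ, t ^ (2*μ-1) * s ^ (-δ) * (θ + s + t^2) ^ (-(μ+1))
            = t ^ (2*μ-1) * (s ^ (-δ) * ((θ + t^2) + s) ^ (-(μ+1))) := by
          intro s
          rw [show θ + s + t^2 = (θ + t^2) + s from by ring]; ring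
        calc ∫⁻ s in Set.Ioi (0:ℝ),
                ENNReal.ofReal (t ^ (2 * μ - 1) * s ^ (-δ) * (θ + s + t ^ 2) ^ (-(μ + 1)))
            = ENNReal.ofReal (t ^ (2*μ-1)) * ∫⁻ s in Set.Ioi (0:ℝ),
                ENNReal.ofReal (s ^ (-δ) * ((θ + t^2) + s) ^ (-(μ+1))) := by
              simp_rw [e1, ENNReal.ofReal_mul (Real.rpow_nonneg ht0.le (2*μ-1))]
              exact lintegral_const_mul' _ _ ENNReal.ofReal_ne_top
          _ ≤ ENNReal.ofReal (t ^ (2*μ-1)) * ENNReal.ofReal (c1 * (θ + t^2) ^ (-(μ+δ))) :=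
              mul_le_mul_right (innerA hμ hδ0 hδ1 hA) _
          _ = ENNReal.ofReal (c1 * (t ^ (2*μ-1) * (θ + t^2) ^ (-(μ+δ)))) := by
              rw [← ENNReal.ofReal_mul (Real.rpow_nonneg ht0.le _)]
              congr 1; ring
    _ = ENNReal.ofReal c1 * ∫⁻ t in Set.Ioi (0:ℝ),
          ENNReal.ofReal (t ^ (2*μ-1) * (θ + t^2) ^ (-(μ+δ))) := by
        simp_rw [ENNReal.ofReal_mul hc1.le]
        exact lintegral_const_mul' _ _ ENNReal.ofReal_ne_top
    _ ≤ ENNReal.ofReal c1 * ENNReal.ofReal (c2 * θ ^ (-δ)) :=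
        mul_le_mul_right (outerB hμ hδ0 hδ1 hθ) _
    _ = ENNReal.ofReal (c1 * c2 * θ ^ (-δ)) := by
        rw [← ENNReal.ofReal_mul hc1.le]; congr 1; ring

end
end

section
/- For every δ with 0 < δ < 1/2 and every M > 0 there exists a constant C = C(δ, M) > 0 such that for all θ > 0, ∬_{0 < v < u < M} u^{−1} (θ + u²)^{−1/2} (u² − v²)^{−δ} du dv ≤ C θ^{−δ}. -/
open MeasureTheory Set


/-- lintegral of `w ^ r` on `Ioo 0 u` for `-1 < r`. -/
private lemma lint_rpow_Ioo {r u : ℝ} (hr : -1 < r) (hu : 0 < u) :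
    ∫⁻ w in Set.Ioo (0:ℝ) u, ENNReal.ofReal (w ^ r) =
      ENNReal.ofReal (u ^ (r+1) / (r+1)) := by
  have hint : IntegrableOn (fun w : ℝ => w ^ r) (Set.Ioo 0 u) volume :=
    (intervalIntegrable_iff_integrableOn_Ioo_of_le hu.le).mp
      (intervalIntegral.intervalIntegrable_rpow' hr)
  rw [← ofReal_integral_eq_lintegral_ofReal hint]
  · congr 1
    have h1 : ∫ w in Set.Ioo (0:ℝ) u, w ^ r = ∫ w in (0:ℝ)..u, w ^ r := by
      rw [intervalIntegral.integral_of_le hu.le, ← integral_Ioc_eq_integral_Ioo]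
    rw [h1, integral_rpow (Or.inl hr), Real.zero_rpow (by linarith), sub_zero]
  · filter_upwards [ae_restrict_mem measurableSet_Ioo] with w hw
    exact Real.rpow_nonneg hw.1.le _

/-- lintegral of `w ^ r` on `Ioi c` for `r < -1`. -/
private lemma lint_rpow_Ioi {r c : ℝ} (hr : r < -1) (hc : 0 < c) :
    ∫⁻ w in Set.Ioi c, ENNReal.ofReal (w ^ r) =
      ENNReal.ofReal (-c ^ (r+1) / (r+1)) := by
  rw [← ofReal_integral_eq_lintegral_ofReal (integrableOn_Ioi_rpow_of_lt hr hc)]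
  · rw [integral_Ioi_rpow_of_lt hr hc]
  · filter_upwards [ae_restrict_mem measurableSet_Ioi] with w hw
    exact Real.rpow_nonneg (hc.trans hw).le _


/-- change of variables `v ↦ u - v` on `Ioo 0 u`. -/
private lemma lint_reflect (u : ℝ) (f : ℝ → ENNReal) :
    ∫⁻ v in Set.Ioo (0:ℝ) u, f (u - v) = ∫⁻ w in Set.Ioo (0:ℝ) u, f w := by
  have hmp : MeasurePreserving (fun v : ℝ => u - v) volume volume :=
    Measure.measurePreserving_sub_left volume u
  have hemb : MeasurableEmbedding (fun v : ℝ => u - v) :=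
    (MeasurableEquiv.subLeft u).measurableEmbedding
  have hpre : (fun v : ℝ => u - v) ⁻¹' Set.Ioo 0 u = Set.Ioo 0 u := by
    ext v; simp only [Set.mem_preimage, Set.mem_Ioo]
    constructor <;> rintro ⟨h1, h2⟩ <;> constructor <;> linarith
  calc ∫⁻ v in Set.Ioo (0:ℝ) u, f (u - v)
      = ∫⁻ v in (fun v : ℝ => u - v) ⁻¹' Set.Ioo 0 u, f (u - v) := by rw [hpre]
    _ = ∫⁻ w in Set.Ioo (0:ℝ) u, f w :=
        hmp.setLIntegral_comp_preimage_emb hemb f _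

/-- inner integral bound. -/
private lemma inner_bound {δ u : ℝ} (hδ0 : 0 < δ) (hδ1 : δ < 1/2) (hu : 0 < u) :
    ∫⁻ v in Set.Ioo (0:ℝ) u, ENNReal.ofReal ((u ^ 2 - v ^ 2) ^ (-δ)) ≤
      ENNReal.ofReal ((1-δ)⁻¹ * u ^ (1 - 2*δ)) := by
  have hδ1' : δ < 1 := by linarith
  have step1 : ∫⁻ v in Set.Ioo (0:ℝ) u, ENNReal.ofReal ((u ^ 2 - v ^ 2) ^ (-δ)) ≤
      ∫⁻ v in Set.Ioo (0:ℝ) u, ENNReal.ofReal (u ^ (-δ) * (u - v) ^ (-δ)) := by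
    refine setLIntegral_mono_ae (by fun_prop) ?_
    filter_upwards [] with v hv
    apply ENNReal.ofReal_le_ofReal
    have h1 : u ^ 2 - v ^ 2 = (u - v) * (u + v) := by ring
    rw [h1, Real.mul_rpow (by linarith [hv.1, hv.2]) (by linarith [hv.1]), mul_comm]
    exact mul_le_mul_of_nonneg_right
      (Real.rpow_le_rpow_of_nonpos hu (by linarith [hv.1]) (by linarith))
      (Real.rpow_nonneg (by linarith [hv.2]) _)
  have step2 : ∫⁻ v in Set.Ioo (0:ℝ) u, ENNReal.ofReal (u ^ (-δ) * (u - v) ^ (-δ)) =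
      ENNReal.ofReal (u ^ (-δ)) * ∫⁻ v in Set.Ioo (0:ℝ) u, ENNReal.ofReal ((u - v) ^ (-δ)) := by
    rw [← lintegral_const_mul' _ _ ENNReal.ofReal_ne_top]
    congr 1 with v
    rw [← ENNReal.ofReal_mul (Real.rpow_nonneg hu.le _)]
  have step3 : ∫⁻ v in Set.Ioo (0:ℝ) u, ENNReal.ofReal ((u - v) ^ (-δ)) =
      ENNReal.ofReal (u ^ (1-δ) / (1-δ)) := by
    rw [lint_reflect u (fun w => ENNReal.ofReal (w ^ (-δ))),
      lint_rpow_Ioo (by linarith) hu, show (-δ)+1 = 1-δ from by ring]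
  refine step1.trans ?_
  rw [step2, step3, ← ENNReal.ofReal_mul (Real.rpow_nonneg hu.le _)]
  apply le_of_eq
  congr 1
  rw [div_eq_inv_mul, ← mul_assoc, mul_comm (u ^ (-δ)) _, mul_assoc,
    ← Real.rpow_add hu, show -δ + (1-δ) = 1-2*δ from by ring]



/-- For `0 < δ < 1/2` and `M > 0` there is `C > 0` such that for all
`θ > 0`, `∬_{0<v<u<M} u^{−1} (θ + u²)^{−1/2} (u² − v²)^{−δ} du dv ≤ C θ^{−δ}`. -/
theorem morse_coordinate_integral_bound
    (δ : ℝ) (hδ0 : 0 < δ) (hδ1 : δ < 1 / 2) (M : ℝ) (hM : 0 < M) :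
    ∃ C : ℝ, 0 < C ∧ ∀ θ : ℝ, 0 < θ →
      ∫⁻ u in Set.Ioo (0 : ℝ) M, ∫⁻ v in Set.Ioo (0 : ℝ) u,
          ENNReal.ofReal (u⁻¹ * (θ + u ^ 2) ^ (-(1 / 2) : ℝ) * (u ^ 2 - v ^ 2) ^ (-δ))
        ≤ ENNReal.ofReal (C * θ ^ (-δ)) := by
  have hδ2 : 0 < 1 - 2*δ := by linarith
  have hδ3 : 0 < 1 - δ := by linarith
  refine ⟨(1-δ)⁻¹ * ((1-2*δ)⁻¹ + (2*δ)⁻¹), by positivity, fun θ hθ => ?_⟩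
  set T : ℝ := θ ^ (2⁻¹ : ℝ) with hT_def
  have hT : 0 < T := Real.rpow_pos_of_pos hθ _
  -- Step 1: bound the inner integral
  have step1 : ∀ u ∈ Set.Ioo (0:ℝ) M,
      (∫⁻ v in Set.Ioo (0 : ℝ) u,
        ENNReal.ofReal (u⁻¹ * (θ + u ^ 2) ^ (-(1 / 2) : ℝ) * (u ^ 2 - v ^ 2) ^ (-δ)))
      ≤ ENNReal.ofReal ((1-δ)⁻¹) *
          ENNReal.ofReal ((θ + u ^ 2) ^ (-(1 / 2) : ℝ) * u ^ (-(2*δ))) := by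
    intro u hu
    have hu0 : 0 < u := hu.1
    have hA : 0 ≤ u⁻¹ * (θ + u ^ 2) ^ (-(1 / 2) : ℝ) := by positivity
    have e1 : ∫⁻ v in Set.Ioo (0 : ℝ) u,
        ENNReal.ofReal (u⁻¹ * (θ + u ^ 2) ^ (-(1 / 2) : ℝ) * (u ^ 2 - v ^ 2) ^ (-δ))
        = ENNReal.ofReal (u⁻¹ * (θ + u ^ 2) ^ (-(1 / 2) : ℝ)) *
          ∫⁻ v in Set.Ioo (0 : ℝ) u, ENNReal.ofReal ((u ^ 2 - v ^ 2) ^ (-δ)) := by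
      rw [← lintegral_const_mul' _ _ ENNReal.ofReal_ne_top]
      congr 1 with v
      rw [← ENNReal.ofReal_mul hA]
    rw [e1]
    calc ENNReal.ofReal (u⁻¹ * (θ + u ^ 2) ^ (-(1 / 2) : ℝ)) *
          ∫⁻ v in Set.Ioo (0 : ℝ) u, ENNReal.ofReal ((u ^ 2 - v ^ 2) ^ (-δ))
        ≤ ENNReal.ofReal (u⁻¹ * (θ + u ^ 2) ^ (-(1 / 2) : ℝ)) *
          ENNReal.ofReal ((1-δ)⁻¹ * u ^ (1 - 2*δ)) :=
          mul_le_mul_right (inner_bound hδ0 hδ1 hu0) _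
      _ = ENNReal.ofReal ((1-δ)⁻¹) *
          ENNReal.ofReal ((θ + u ^ 2) ^ (-(1 / 2) : ℝ) * u ^ (-(2*δ))) := by
          rw [← ENNReal.ofReal_mul hA, ← ENNReal.ofReal_mul (by positivity)]
          congr 1
          have hui : u⁻¹ = u ^ (-1 : ℝ) := by
            rw [Real.rpow_neg_one u]
          rw [hui]
          rw [show u ^ (-1:ℝ) * (θ + u ^ 2) ^ (-(1 / 2) : ℝ) * ((1-δ)⁻¹ * u ^ (1 - 2*δ))
              = (1-δ)⁻¹ * ((θ + u ^ 2) ^ (-(1 / 2) : ℝ) * (u ^ (-1:ℝ) * u ^ (1 - 2*δ))) from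
            by ring, ← Real.rpow_add hu0, show (-1:ℝ) + (1 - 2*δ) = -(2*δ) from by ring]
  -- Step 2: apply inner bound to outer integral
  have step2 : ∫⁻ u in Set.Ioo (0 : ℝ) M, ∫⁻ v in Set.Ioo (0 : ℝ) u,
        ENNReal.ofReal (u⁻¹ * (θ + u ^ 2) ^ (-(1 / 2) : ℝ) * (u ^ 2 - v ^ 2) ^ (-δ))
      ≤ ENNReal.ofReal ((1-δ)⁻¹) *
        ∫⁻ u in Set.Ioo (0 : ℝ) M,
          ENNReal.ofReal ((θ + u ^ 2) ^ (-(1 / 2) : ℝ) * u ^ (-(2*δ))) := by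
    rw [← lintegral_const_mul' _ _ ENNReal.ofReal_ne_top]
    exact setLIntegral_mono_ae (by fun_prop) (Filter.Eventually.of_forall step1)
  refine step2.trans ?_
  -- Step 3: split the outer integral
  have hsub : Set.Ioo (0:ℝ) M ⊆ Set.Ioc 0 T ∪ Set.Ioi T := by
    intro u hu
    rcases le_or_gt u T with h | h
    · exact Or.inl ⟨hu.1, h⟩
    · exact Or.inr h
  have split : ∫⁻ u in Set.Ioo (0 : ℝ) M,
        ENNReal.ofReal ((θ + u ^ 2) ^ (-(1 / 2) : ℝ) * u ^ (-(2*δ)))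
      ≤ (∫⁻ u in Set.Ioc (0:ℝ) T,
          ENNReal.ofReal ((θ + u ^ 2) ^ (-(1 / 2) : ℝ) * u ^ (-(2*δ))))
        + ∫⁻ u in Set.Ioi T,
          ENNReal.ofReal ((θ + u ^ 2) ^ (-(1 / 2) : ℝ) * u ^ (-(2*δ))) :=
    (lintegral_mono_set hsub).trans (lintegral_union_le _ _ _)
  -- Step 4a: piece on Ioc 0 T
  have piece1 : ∫⁻ u in Set.Ioc (0:ℝ) T,
        ENNReal.ofReal ((θ + u ^ 2) ^ (-(1 / 2) : ℝ) * u ^ (-(2*δ)))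
      ≤ ENNReal.ofReal ((1-2*δ)⁻¹ * θ ^ (-δ)) := by
    have pb : ∀ u ∈ Set.Ioc (0:ℝ) T,
        ENNReal.ofReal ((θ + u ^ 2) ^ (-(1 / 2) : ℝ) * u ^ (-(2*δ)))
        ≤ ENNReal.ofReal (θ ^ (-(1/2) : ℝ)) * ENNReal.ofReal (u ^ (-(2*δ))) := by
      intro u hu
      rw [← ENNReal.ofReal_mul (Real.rpow_nonneg hθ.le _)]
      apply ENNReal.ofReal_le_ofReal
      apply mul_le_mul_of_nonneg_right _ (Real.rpow_nonneg hu.1.le _)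
      exact Real.rpow_le_rpow_of_nonpos hθ (by nlinarith [sq_nonneg u]) (by norm_num)
    calc ∫⁻ u in Set.Ioc (0:ℝ) T,
          ENNReal.ofReal ((θ + u ^ 2) ^ (-(1 / 2) : ℝ) * u ^ (-(2*δ)))
        ≤ ∫⁻ u in Set.Ioc (0:ℝ) T,
          ENNReal.ofReal (θ ^ (-(1/2) : ℝ)) * ENNReal.ofReal (u ^ (-(2*δ))) :=
          setLIntegral_mono_ae (by fun_prop) (Filter.Eventually.of_forall pb)
      _ = ENNReal.ofReal (θ ^ (-(1/2) : ℝ)) *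
          ∫⁻ u in Set.Ioo (0:ℝ) T, ENNReal.ofReal (u ^ (-(2*δ))) := by
          rw [lintegral_const_mul' _ _ ENNReal.ofReal_ne_top,
            setLIntegral_congr (Ioo_ae_eq_Ioc (a := (0:ℝ)) (b := T)).symm]
      _ = ENNReal.ofReal (θ ^ (-(1/2) : ℝ)) * ENNReal.ofReal (T ^ (-(2*δ)+1) / (-(2*δ)+1)) := by
          rw [lint_rpow_Ioo (by linarith) hT]
      _ ≤ ENNReal.ofReal ((1-2*δ)⁻¹ * θ ^ (-δ)) := by
          rw [← ENNReal.ofReal_mul (Real.rpow_nonneg hθ.le _)]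
          apply le_of_eq
          congr 1
          rw [hT_def, ← Real.rpow_mul hθ.le]
          have key : θ ^ (-(1/2) : ℝ) * θ ^ (2⁻¹ * (-(2*δ)+1)) = θ ^ (-δ) := by
            rw [← Real.rpow_add hθ]; congr 1; ring
          rw [← key]; ring
  -- Step 4b: piece on Ioi T
  have piece2 : ∫⁻ u in Set.Ioi T,
        ENNReal.ofReal ((θ + u ^ 2) ^ (-(1 / 2) : ℝ) * u ^ (-(2*δ)))
      ≤ ENNReal.ofReal ((2*δ)⁻¹ * θ ^ (-δ)) := by
    have pb : ∀ u ∈ Set.Ioi T,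
        ENNReal.ofReal ((θ + u ^ 2) ^ (-(1 / 2) : ℝ) * u ^ (-(2*δ)))
        ≤ ENNReal.ofReal (u ^ (-(1+2*δ))) := by
      intro u hu
      have hu0 : 0 < u := hT.trans hu
      apply ENNReal.ofReal_le_ofReal
      have h1 : (θ + u ^ 2) ^ (-(1 / 2) : ℝ) ≤ u ^ (-1 : ℝ) := by
        have : (θ + u ^ 2) ^ (-(1 / 2) : ℝ) ≤ (u ^ 2 : ℝ) ^ (-(1 / 2) : ℝ) :=
          Real.rpow_le_rpow_of_nonpos (by positivity) (by linarith) (by norm_num)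
        refine this.trans (le_of_eq ?_)
        rw [← Real.rpow_natCast u 2, ← Real.rpow_mul hu0.le]
        norm_num
      calc (θ + u ^ 2) ^ (-(1 / 2) : ℝ) * u ^ (-(2*δ))
          ≤ u ^ (-1 : ℝ) * u ^ (-(2*δ)) :=
            mul_le_mul_of_nonneg_right h1 (Real.rpow_nonneg hu0.le _)
        _ = u ^ (-(1+2*δ)) := by
            rw [← Real.rpow_add hu0]; congr 1; ring
    calc ∫⁻ u in Set.Ioi T,
          ENNReal.ofReal ((θ + u ^ 2) ^ (-(1 / 2) : ℝ) * u ^ (-(2*δ)))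
        ≤ ∫⁻ u in Set.Ioi T, ENNReal.ofReal (u ^ (-(1+2*δ))) :=
          setLIntegral_mono_ae (by fun_prop) (Filter.Eventually.of_forall pb)
      _ = ENNReal.ofReal (-T ^ (-(1+2*δ)+1) / (-(1+2*δ)+1)) :=
          lint_rpow_Ioi (by linarith) hT
      _ ≤ ENNReal.ofReal ((2*δ)⁻¹ * θ ^ (-δ)) := by
          apply le_of_eq
          congr 1
          rw [hT_def, ← Real.rpow_mul hθ.le]
          have key : θ ^ (2⁻¹ * (-(1+2*δ)+1)) = θ ^ (-δ) := by congr 1; ring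
          rw [key]
          rw [show -(1+2*δ)+1 = -(2*δ) from by ring]
          field_simp
  -- Combine
  calc ENNReal.ofReal ((1-δ)⁻¹) *
        ∫⁻ u in Set.Ioo (0 : ℝ) M,
          ENNReal.ofReal ((θ + u ^ 2) ^ (-(1 / 2) : ℝ) * u ^ (-(2*δ)))
      ≤ ENNReal.ofReal ((1-δ)⁻¹) *
        (ENNReal.ofReal ((1-2*δ)⁻¹ * θ ^ (-δ)) + ENNReal.ofReal ((2*δ)⁻¹ * θ ^ (-δ))) :=
        mul_le_mul_right (split.trans (add_le_add piece1 piece2)) _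
    _ = ENNReal.ofReal ((1-δ)⁻¹ * ((1-2*δ)⁻¹ + (2*δ)⁻¹) * θ ^ (-δ)) := by
        rw [← ENNReal.ofReal_add (by positivity) (by positivity),
          ← ENNReal.ofReal_mul (by positivity)]
        congr 1
        ring
end

section
/- Let K ⊂ ℝ^N be compact and r a real-valued C² function on an open neighborhood of K. Then there exists c > 0 such that for every y ∈ K there is an index m ∈ {1, …, N} with the property that for every x ∈ K with |x − y| ≤ c |∇r(y)| one has |∂r/∂x_m (x)| ≥ |∇r(y)|/(2√N); in particular |∇r(x)| ≥ |∇r(y)|/(2√N) for all such x. -/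
/-!
Choose the coordinate `m` in which `|∂r/∂x_m (y)|` is largest; it is at least `|∇r(y)|/√N`.
Since `r` is `C²`, `∇r` is `L`-Lipschitz on the balls of some fixed radius `δ` around points of
`K`, so moving `x` by at most `|∇r(y)|/(2√N L)` changes `∂r/∂x_m` by at most `|∇r(y)|/(2√N)`.
A bound `M` for `|∇r|` on `K` makes `c ≤ δ / M` keep `x` inside the ball of radius `δ`.
-/

open Metric

theorem EuclideanSpace.exists_norm_le_sqrt_card_mul_abs {ι : Type*} [Fintype ι] [Nonempty ι]
    (v : EuclideanSpace ℝ ι) : ∃ m : ι, ‖v‖ ≤ √(Fintype.card ι) * |v m| := by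
  obtain ⟨m, -, hm⟩ := Finset.exists_max_image Finset.univ (fun i => |v i|) Finset.univ_nonempty
  refine ⟨m, ?_⟩
  have hsum : ∑ i, ‖v i‖ ^ 2 ≤ Fintype.card ι * |v m| ^ 2 := by
    calc ∑ i, ‖v i‖ ^ 2 ≤ ∑ _i : ι, |v m| ^ 2 :=
          Finset.sum_le_sum fun i _ => pow_le_pow_left₀ (abs_nonneg _) (hm i (by simp)) 2
      _ = Fintype.card ι * |v m| ^ 2 := by simp
  calc ‖v‖ = √(∑ i, ‖v i‖ ^ 2) := EuclideanSpace.norm_eq v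
    _ ≤ √(Fintype.card ι * |v m| ^ 2) := Real.sqrt_le_sqrt hsum
    _ = √(Fintype.card ι) * |v m| := by
      rw [Real.sqrt_mul (Nat.cast_nonneg _), Real.sqrt_sq_eq_abs, abs_abs]

theorem EuclideanSpace.exists_norm_le_sqrt_card_mul_abs_apply_single {ι : Type*} [Fintype ι]
    [DecidableEq ι] [Nonempty ι] (f : EuclideanSpace ℝ ι →L[ℝ] ℝ) :
    ∃ m : ι, ‖f‖ ≤ √(Fintype.card ι) * |f (EuclideanSpace.single m 1)| := by
  set v := (InnerProductSpace.toDual ℝ (EuclideanSpace ℝ ι)).symm f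
  have hv : ∀ i, f (EuclideanSpace.single i 1) = v i := fun i => by
    rw [← InnerProductSpace.toDual_symm_apply, EuclideanSpace.inner_single_right]
    simp [v]
  obtain ⟨m, hm⟩ := EuclideanSpace.exists_norm_le_sqrt_card_mul_abs v
  exact ⟨m, by rwa [hv, ← (InnerProductSpace.toDual ℝ _).symm.norm_map f]⟩

theorem EuclideanSpace.abs_apply_single_le_norm {ι : Type*} [Fintype ι] [DecidableEq ι]
    (f : EuclideanSpace ℝ ι →L[ℝ] ℝ) (m : ι) : |f (EuclideanSpace.single m 1)| ≤ ‖f‖ := by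
  simpa using f.le_opNorm (EuclideanSpace.single m 1)

theorem ContinuousLinearMap.div_two_mul_le_abs_apply_of_norm_sub_le {E : Type*}
    [SeminormedAddCommGroup E] [NormedSpace ℝ E] {f g : E →L[ℝ] ℝ} {v : E} {s : ℝ} (hs : 0 < s)
    (hv : ‖v‖ ≤ 1) (hf : ‖f‖ ≤ s * |f v|) (hfg : ‖f - g‖ ≤ ‖f‖ / (2 * s)) :
    ‖f‖ / (2 * s) ≤ |g v| := by
  have hfv : ‖f‖ / s ≤ |f v| := (div_le_iff₀' hs).2 hf
  have hfgv : |f v - g v| ≤ ‖f‖ / (2 * s) := calc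
    |f v - g v| = ‖(f - g) v‖ := rfl
    _ ≤ ‖f - g‖ * ‖v‖ := (f - g).le_opNorm v
    _ ≤ ‖f - g‖ := mul_le_of_le_one_right (norm_nonneg _) hv
    _ ≤ ‖f‖ / (2 * s) := hfg
  have hhalf : ‖f‖ / s = 2 * (‖f‖ / (2 * s)) := by field_simp
  linarith [abs_sub_abs_le_abs_sub (f v) (g v)]

theorem IsCompact.exists_pos_forall_lipschitzOnWith_closedBall {E F : Type*}
    [NormedAddCommGroup E] [NormedSpace ℝ E] [ProperSpace E]
    [NormedAddCommGroup F] [NormedSpace ℝ F] {K W : Set E} {g : E → F}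
    (hK : IsCompact K) (hW : IsOpen W) (hKW : K ⊆ W) (hg : ContDiffOn ℝ 1 g W) :
    ∃ δ > 0, ∃ L, ∀ y ∈ K, LipschitzOnWith L g (closedBall y δ) := by
  obtain ⟨δ, hδ, hTW⟩ := hK.exists_cthickening_subset_open hW hKW
  have hdiff : ∀ x ∈ W, DifferentiableAt ℝ g x := fun x hx =>
    (hg.differentiableOn one_ne_zero).differentiableAt (hW.mem_nhds hx)
  obtain ⟨L, hL⟩ := hK.cthickening.exists_bound_of_continuousOn
    ((hg.continuousOn_fderiv_of_isOpen hW le_rfl).mono hTW)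
  refine ⟨δ, hδ, L.toNNReal, fun y hy =>
    (convex_closedBall y δ).lipschitzOnWith_of_nnnorm_fderiv_le
      (fun x hx => hdiff x (hTW ?_)) (fun x hx => ?_)⟩
  · exact closedBall_subset_cthickening hy δ hx
  · rw [← NNReal.coe_le_coe, coe_nnnorm]
    exact (hL x (closedBall_subset_cthickening hy δ hx)).trans L.le_coe_toNNReal

/-- (Schmalz's lemma, quantitative core.)  For `r` of class `C²` on a
neighborhood of a compact set `K ⊂ ℝ^N` there is `c > 0` such that for every `y ∈ K`
some partial derivative `∂r/∂x_m` satisfies `|∂r/∂x_m(x)| ≥ |∇r(y)|/(2√N)` for all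
`x ∈ K` with `|x − y| ≤ c|∇r(y)|`; in particular `|∇r(x)| ≥ |∇r(y)|/(2√N)` there. -/
theorem schmalz_anisotropic_ball_partial_lower_bound
    (N : ℕ) (hN : 0 < N)
    (K W : Set (EuclideanSpace ℝ (Fin N))) (hK : IsCompact K)
    (hW : IsOpen W) (hKW : K ⊆ W)
    (r : EuclideanSpace ℝ (Fin N) → ℝ) (hr : ContDiffOn ℝ 2 r W) :
    ∃ c : ℝ, 0 < c ∧ ∀ y ∈ K, ∃ m : Fin N, ∀ x ∈ K,
      ‖x - y‖ ≤ c * ‖fderiv ℝ r y‖ →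
        ‖fderiv ℝ r y‖ / (2 * Real.sqrt N)
            ≤ |fderiv ℝ r x (EuclideanSpace.single m 1)| ∧
          ‖fderiv ℝ r y‖ / (2 * Real.sqrt N) ≤ ‖fderiv ℝ r x‖ := by
  have : Nonempty (Fin N) := ⟨⟨0, hN⟩⟩
  obtain ⟨δ, hδ, L, hL⟩ := hK.exists_pos_forall_lipschitzOnWith_closedBall hW hKW
    (hr.fderiv_of_isOpen hW (by norm_num))
  obtain ⟨M, hM, hMK⟩ := (hK.image_of_continuousOn
    ((hr.continuousOn_fderiv_of_isOpen hW one_le_two).mono hKW)).isBounded.exists_pos_norm_le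
  have hsN : 0 < √N := by positivity
  refine ⟨min (δ / M) (1 / (2 * √N * (L + 1))), by positivity, fun y hy => ?_⟩
  obtain ⟨m, hm⟩ := EuclideanSpace.exists_norm_le_sqrt_card_mul_abs_apply_single (fderiv ℝ r y)
  rw [Fintype.card_fin] at hm
  refine ⟨m, fun x _ hxy => ?_⟩
  have hxδ : x ∈ closedBall y δ := calc
    dist x y = ‖x - y‖ := dist_eq_norm x y
    _ ≤ δ / M * M := hxy.trans (mul_le_mul (min_le_left _ _) (hMK _ ⟨y, hy, rfl⟩)
      (norm_nonneg _) (by positivity))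
    _ = δ := div_mul_cancel₀ δ hM.ne'
  have hclose : ‖fderiv ℝ r y - fderiv ℝ r x‖ ≤ ‖fderiv ℝ r y‖ / (2 * √N) := calc
    _ ≤ L * ‖y - x‖ := (hL y hy).norm_sub_le (mem_closedBall_self hδ.le) hxδ
    _ ≤ (L + 1) * (1 / (2 * √N * (L + 1)) * ‖fderiv ℝ r y‖) := by
      rw [norm_sub_rev]
      gcongr
      · linarith
      · exact hxy.trans (mul_le_mul_of_nonneg_right (min_le_right _ _) (norm_nonneg _))
    _ = ‖fderiv ℝ r y‖ / (2 * √N) := by field_simp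
  have hpartial := (fderiv ℝ r y).div_two_mul_le_abs_apply_of_norm_sub_le hsN
    (by simp) hm hclose
  exact ⟨hpartial, hpartial.trans (EuclideanSpace.abs_apply_single_le_norm _ m)⟩
end
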